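/- arXiv:2008.00104 — 4 statements merged into one kernel-verified Lean document; each statement's English description precedes it below -/
import Mathlib

section
/- In the relocation multigraph G¹ built from an optimal matching X for provider set C and an optimal matching X¹ for provider set C ∪ {c₁} (where c₁ ∉ C), any directed cycle in G¹ has total weight 0, and moreover one may assume w.l.o.g. that the optimal X¹ induces an acyclic relocation graph. -/
/-- Feasible matching for provider set `S`. -/
def Feasible {U C : Type*} [Fintype U] [DecidableEq C]
    (ν : C → ℕ) (S : Finset C) (X : U → C) : Prop :=
  (∀ u, X u ∈ S) ∧ ∀ c ∈ S, ν c ≤ (Finset.univ.filter fun u => X u = c).card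

/-- Welfare-optimal feasible matching for provider set `S`. -/
def OptMatching {U C : Type*} [Fintype U] [DecidableEq C]
    (A : U → C → ℝ) (ν : C → ℕ) (S : Finset C) (X : U → C) : Prop :=
  Feasible ν S X ∧ ∀ Y : U → C, Feasible ν S Y → ∑ u, A u (Y u) ≤ ∑ u, A u (X u)

/-- A directed cycle in the relocation multigraph between matchings `X` and `X1`:
an injective cyclic sequence of relocated users, the target provider of each being
the source provider of the next. -/
def RelocCycle {U C : Type*} (X X1 : U → C) (n : ℕ) (u : Fin (n + 1) → U) : Prop :=
  Function.Injective u ∧ (∀ i, X (u i) ≠ X1 (u i)) ∧ ∀ i, X1 (u i) = X (u (i + 1))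

open Finset

noncomputable def reroute {U C : Type*} (X X1 : U → C) {n : ℕ} (u : Fin (n + 1) → U) : U → C :=
  fun v => @ite _ (∃ i, u i = v) (Classical.propDecidable _) (X1 v) (X v)

lemma reroute_pos {U C : Type*} (X X1 : U → C) {n : ℕ} (u : Fin (n + 1) → U) {v : U}
    (h : ∃ i, u i = v) : reroute X X1 u v = X1 v := by
  simp only [reroute]; rw [if_pos h]

lemma reroute_neg {U C : Type*} (X X1 : U → C) {n : ℕ} (u : Fin (n + 1) → U) {v : U}
    (h : ¬ ∃ i, u i = v) : reroute X X1 u v = X v := by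
  simp only [reroute]; rw [if_neg h]

lemma reroute_counts {U C : Type*} [Fintype U] [DecidableEq C]
    (X X1 : U → C) {n : ℕ} (u : Fin (n + 1) → U) (hu : Function.Injective u)
    (hcyc : ∀ i, X1 (u i) = X (u (i + 1))) (c : C) :
    (univ.filter fun v => reroute X X1 u v = c).card
      = (univ.filter fun v => X v = c).card := by
  classical
  rw [card_filter, card_filter,
    ← Finset.sum_filter_add_sum_filter_not univ (fun v => ∃ i, u i = v)
      (fun v => if reroute X X1 u v = c then 1 else 0),
    ← Finset.sum_filter_add_sum_filter_not univ (fun v => ∃ i, u i = v)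
      (fun v => if X v = c then 1 else 0)]
  have himg : univ.filter (fun v => ∃ i, u i = v) = Finset.image u univ := by
    ext v; simp [eq_comm]
  congr 1
  · rw [himg, Finset.sum_image (fun a _ b _ h => hu h),
      Finset.sum_image (fun a _ b _ h => hu h)]
    have h1 : ∀ i, reroute X X1 u (u i) = X (u (i + 1)) := fun i => by
      rw [reroute_pos X X1 u ⟨i, rfl⟩, hcyc]
    calc ∑ i, (if reroute X X1 u (u i) = c then (1:ℕ) else 0)
        = ∑ i, (if X (u (i + 1)) = c then 1 else 0) := by simp_rw [h1]
      _ = ∑ i, (if X (u i) = c then 1 else 0) :=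
          Fintype.sum_equiv (Equiv.addRight 1) _ _ (fun i => rfl)
  · apply Finset.sum_congr rfl
    intro v hv
    rw [mem_filter] at hv
    rw [reroute_neg X X1 u hv.2]

lemma reroute_sum {U C : Type*} [Fintype U] (A : U → C → ℝ) (X X1 : U → C) {n : ℕ}
    (u : Fin (n + 1) → U) (hu : Function.Injective u) :
    ∑ v, A v (reroute X X1 u v)
      = ∑ v, A v (X v) + ∑ i, (A (u i) (X1 (u i)) - A (u i) (X (u i))) := by
  classical
  have key : ∑ v, (A v (reroute X X1 u v) - A v (X v))
      = ∑ i, (A (u i) (X1 (u i)) - A (u i) (X (u i))) := by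
    rw [← Finset.sum_filter_add_sum_filter_not univ (fun v => ∃ i, u i = v)]
    have h2 : ∑ v ∈ univ.filter (fun v => ¬ ∃ i, u i = v),
        (A v (reroute X X1 u v) - A v (X v)) = 0 := by
      apply Finset.sum_eq_zero; intro v hv; rw [mem_filter] at hv
      rw [reroute_neg X X1 u hv.2]; ring
    have himg : univ.filter (fun v => ∃ i, u i = v) = Finset.image u univ := by
      ext v; simp [eq_comm]
    rw [h2, add_zero, himg, Finset.sum_image (fun a _ b _ h => hu h)]
    apply Finset.sum_congr rfl; intro i _
    rw [reroute_pos X X1 u ⟨i, rfl⟩]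
  rw [Finset.sum_sub_distrib] at key
  linarith

section Main
variable {U C : Type*} [Fintype U] [DecidableEq C]
  (A : U → C → ℝ) (ν : C → ℕ) (S : Finset C) (c1 : C)

lemma neg_cycle {X X1 : U → C} {n : ℕ} {u : Fin (n + 1) → U}
    (hu : Function.Injective u) (hcyc : ∀ i, X1 (u i) = X (u (i + 1))) :
    Function.Injective (fun i : Fin (n+1) => u (-i)) ∧
      (∀ i : Fin (n+1), X (u (-i)) = X1 (u (-(i + 1)))) ∧
      (∀ v, (∃ i : Fin (n+1), u (-i) = v) ↔ (∃ i, u i = v)) := by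
  refine ⟨fun a b h => neg_injective (hu h), fun i => ?_, fun v => ?_⟩
  · rw [hcyc (-(i+1))]
    congr 1
    rw [neg_add, neg_add_cancel_right]
  · constructor
    · rintro ⟨i, rfl⟩; exact ⟨-i, rfl⟩
    · rintro ⟨i, rfl⟩; exact ⟨-i, by rw [neg_neg]⟩

lemma cycle_weight_zero {X X1 : U → C}
    (hX : OptMatching A ν S X) (hX1 : OptMatching A ν (insert c1 S) X1)
    {n : ℕ} {u : Fin (n + 1) → U} (h : RelocCycle X X1 n u) :
    ∑ i, (A (u i) (X1 (u i)) - A (u i) (X (u i))) = 0 := by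
  obtain ⟨hu, -, hcyc⟩ := h
  -- forward: apply the cycle to X
  have hYfeas : Feasible ν S (reroute X X1 u) := by
    constructor
    · intro v
      by_cases hv : ∃ i, u i = v
      · rw [reroute_pos _ _ _ hv]
        obtain ⟨i, rfl⟩ := hv
        rw [hcyc]
        exact hX.1.1 _
      · rw [reroute_neg _ _ _ hv]; exact hX.1.1 _
    · intro c hc; rw [reroute_counts X X1 u hu hcyc]; exact hX.1.2 c hc
  have h1 := hX.2 _ hYfeas
  rw [reroute_sum A X X1 u hu] at h1
  -- backward: undo the cycle on X1, traversed in reverse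
  obtain ⟨hu', hcyc', -⟩ := neg_cycle hu hcyc
  have h2 := hX1.2 _ (show Feasible ν (insert c1 S)
      (reroute X1 X (fun i => u (-i))) from ?_)
  · rw [reroute_sum A X1 X _ hu'] at h2
    have h3 : ∑ i : Fin (n+1), (A (u (-i)) (X (u (-i))) - A (u (-i)) (X1 (u (-i))))
        = ∑ i : Fin (n+1), -(A (u i) (X1 (u i)) - A (u i) (X (u i))) :=
      Fintype.sum_equiv (Equiv.neg (Fin (n+1))) _ _ (fun i => by simp)
    rw [h3, Finset.sum_neg_distrib] at h2
    linarith
  · constructor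
    · intro v
      by_cases hv : ∃ i : Fin (n+1), u (-i) = v
      · rw [reroute_pos _ _ _ hv]; exact Finset.mem_insert_of_mem (hX.1.1 v)
      · rw [reroute_neg _ _ _ hv]; exact hX1.1.1 v
    · intro c hc; rw [reroute_counts X1 X _ hu' hcyc']; exact hX1.1.2 c hc

lemma remove_cycle {X X1 : U → C}
    (hX : OptMatching A ν S X) (hX1 : OptMatching A ν (insert c1 S) X1)
    {n : ℕ} {u : Fin (n + 1) → U} (h : RelocCycle X X1 n u) :
    ∃ Y : U → C, OptMatching A ν (insert c1 S) Y ∧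
      (univ.filter fun v => X v ≠ Y v).card < (univ.filter fun v => X v ≠ X1 v).card := by
  classical
  have hw0 := cycle_weight_zero A ν S c1 hX hX1 h
  obtain ⟨hu, hne, hcyc⟩ := h
  obtain ⟨hu', hcyc', hrange⟩ := neg_cycle hu hcyc
  set Y : U → C := reroute X1 X (fun i => u (-i)) with hY
  have hYfeas : Feasible ν (insert c1 S) Y := by
    constructor
    · intro v
      by_cases hv : ∃ i : Fin (n+1), u (-i) = v
      · rw [hY, reroute_pos _ _ _ hv]; exact Finset.mem_insert_of_mem (hX.1.1 v)
      · rw [hY, reroute_neg _ _ _ hv]; exact hX1.1.1 v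
    · intro c hc; rw [hY, reroute_counts X1 X _ hu' hcyc']; exact hX1.1.2 c hc
  have hsum : ∑ v, A v (Y v) = ∑ v, A v (X1 v) := by
    rw [hY, reroute_sum A X1 X _ hu']
    have h3 : ∑ i : Fin (n+1), (A (u (-i)) (X (u (-i))) - A (u (-i)) (X1 (u (-i))))
        = ∑ i : Fin (n+1), -(A (u i) (X1 (u i)) - A (u i) (X (u i))) :=
      Fintype.sum_equiv (Equiv.neg (Fin (n+1))) _ _ (fun i => by simp)
    rw [h3, Finset.sum_neg_distrib, hw0]
    ring
  refine ⟨Y, ⟨hYfeas, fun Z hZ => hsum ▸ hX1.2 Z hZ⟩, Finset.card_lt_card ?_⟩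
  constructor
  · intro v hv
    rw [mem_filter] at hv ⊢
    refine ⟨mem_univ v, ?_⟩
    by_cases hv2 : ∃ i : Fin (n+1), u (-i) = v
    · exact absurd (by rw [hY, reroute_pos _ _ _ hv2]) hv.2
    · rw [hY, reroute_neg _ _ _ hv2] at hv
      exact hv.2
  · intro hsub
    have h0 : u 0 ∈ univ.filter fun v => X v ≠ X1 v := by
      rw [mem_filter]; exact ⟨mem_univ _, hne 0⟩
    have := hsub h0
    rw [mem_filter] at this
    apply this.2
    rw [hY, reroute_pos _ _ _ ⟨0, by rw [neg_zero]⟩]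

end Main

/-- In the relocation multigraph `G¹` between an optimal matching `X` for `C` and an
optimal matching `X¹` for `C ∪ {c₁}` (with `c₁ ∉ C`): every directed cycle has total
weight `0`, and w.l.o.g. one may choose an optimal `X¹` whose relocation graph is
acyclic. -/
theorem relocation_graph_no_cycle {U C : Type*} [Fintype U] [DecidableEq C]
    (A : U → C → ℝ) (ν : C → ℕ) (S : Finset C) (c1 : C) (hc1 : c1 ∉ S)
    (X X1 : U → C)
    (hX : OptMatching A ν S X) (hX1 : OptMatching A ν (insert c1 S) X1) :
    (∀ (n : ℕ) (u : Fin (n + 1) → U), RelocCycle X X1 n u →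
      ∑ i, (A (u i) (X1 (u i)) - A (u i) (X (u i))) = 0) ∧
    ∃ X1' : U → C, OptMatching A ν (insert c1 S) X1' ∧
      ¬ ∃ (n : ℕ) (u : Fin (n + 1) → U), RelocCycle X X1' n u := by
  classical
  refine ⟨fun n u h => cycle_weight_zero A ν S c1 hX hX1 h, ?_⟩
  have hex : ∃ k, ∃ Y : U → C, OptMatching A ν (insert c1 S) Y ∧
      (univ.filter fun v => X v ≠ Y v).card = k :=
    ⟨_, X1, hX1, rfl⟩
  obtain ⟨Y, hYopt, hYcard⟩ := Nat.find_spec hex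
  refine ⟨Y, hYopt, ?_⟩
  rintro ⟨n, u, hcy⟩
  obtain ⟨Y', hY'opt, hY'lt⟩ := remove_cycle A ν S c1 hX hYopt hcy
  exact Nat.find_min hex (hYcard ▸ hY'lt) ⟨Y', hY'opt, rfl⟩
end

section
/- In any finite directed multigraph where every node other than a distinguished sink s satisfies outdegree ≥ indegree (flow conservation towards sources), and which contains no directed cycles, the edge set can be partitioned into edge-disjoint directed paths each ending at s. -/
/-!
Take a longest trail (a walk without repeated edges) in the current edge set. An edge leaving
its last vertex or entering its first one cannot lie outside the trail, since the trail would
extend, nor on it, since that would close a cycle. So the trail ends at `s`, because every other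
vertex that is entered is also left, and its first vertex has no incoming edge. Deleting the
trail therefore lowers in- and outdegree equally at every vertex other than `s` and the first
vertex, where the indegree is already zero, and induction on the edge set finishes.
-/

open Finset

namespace Multigraph

variable {V E : Type*} (src tgt : E → V)

def HasCycle : Prop :=
  ∃ (n : ℕ) (c : Fin (n + 1) → E), Function.Injective c ∧ ∀ i, tgt (c i) = src (c (i + 1))

def IsTrail (l : List E) : Prop :=
  l.Nodup ∧ l.IsChain (fun a b => tgt a = src b)

def IsLongestTrailIn (S : Finset E) (l : List E) : Prop :=
  IsTrail src tgt l ∧ (∀ e ∈ l, e ∈ S) ∧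
    ∀ l', IsTrail src tgt l' → (∀ e ∈ l', e ∈ S) → l'.length ≤ l.length

def InDegLeOutDeg [DecidableEq V] (s : V) (S : Finset E) : Prop :=
  ∀ v, v ≠ s → #{e ∈ S | tgt e = v} ≤ #{e ∈ S | src e = v}

def IsPathTo (s : V) (p : List E) : Prop :=
  p ≠ [] ∧ p.IsChain (fun a b => tgt a = src b) ∧ ∀ e, p.getLast? = some e → tgt e = s

variable {src tgt}

theorem IsTrail.hasCycle_of_tgt_getLast_eq {l : List E} (hl : IsTrail src tgt l) (hne : l ≠ [])
    (hclosed : tgt (l.getLast hne) = src (l.head hne)) : HasCycle src tgt := by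
  obtain ⟨n, hn⟩ : ∃ n, l.length = n + 1 :=
    Nat.exists_eq_succ_of_ne_zero (by simpa using hne)
  refine ⟨n, fun i => l[(i : ℕ)]'(by omega),
    fun i j hij => Fin.ext (hl.1.getElem_inj_iff.1 hij), fun i => ?_⟩
  induction i using Fin.lastCases with
  | last => simpa [List.getLast_eq_getElem, List.head_eq_getElem, hn] using hclosed
  | cast j => simpa [Fin.coeSucc_eq_succ] using List.isChain_iff_getElem.1 hl.2 j (by omega)

namespace IsTrail

variable {l : List E} {f : E}

theorem of_isInfix {l₁ : List E} (hl : IsTrail src tgt l) (h : l₁ <:+: l) :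
    IsTrail src tgt l₁ :=
  ⟨hl.1.sublist h.sublist, hl.2.infix h⟩

theorem concat (hl : IsTrail src tgt l) (hne : l ≠ []) (hf : f ∉ l)
    (h : tgt (l.getLast hne) = src f) : IsTrail src tgt (l ++ [f]) := by
  refine ⟨List.nodup_append.2 ⟨hl.1, List.nodup_singleton f, by grind⟩,
    List.isChain_append.2 ⟨hl.2, List.isChain_singleton f, ?_⟩⟩
  simpa [List.getLast?_eq_some_getLast hne] using h

theorem cons (hl : IsTrail src tgt l) (hne : l ≠ []) (hf : f ∉ l)
    (h : tgt f = src (l.head hne)) : IsTrail src tgt (f :: l) :=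
  ⟨List.nodup_cons.2 ⟨hf, hl.1⟩, hl.2.cons (by simpa [List.head?_eq_some_head hne] using h)⟩

theorem src_ne_tgt_getLast (hacyc : ¬ HasCycle src tgt) (hl : IsTrail src tgt l)
    (hne : l ≠ []) (hf : f ∈ l) : src f ≠ tgt (l.getLast hne) := by
  obtain ⟨a, b, rfl⟩ := List.append_of_mem hf
  refine fun h => hacyc ((hl.of_isInfix (List.suffix_append a _).isInfix).hasCycle_of_tgt_getLast_eq
    (List.cons_ne_nil f b) ?_)
  rw [List.getLast_append_of_ne_nil _ (List.cons_ne_nil f b)] at h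
  exact h.symm

theorem tgt_ne_src_head (hacyc : ¬ HasCycle src tgt) (hl : IsTrail src tgt l)
    (hne : l ≠ []) (hf : f ∈ l) : tgt f ≠ src (l.head hne) := by
  obtain ⟨a, b, rfl⟩ := List.append_of_mem hf
  have hpre : a ++ [f] <+: a ++ f :: b := ⟨b, by simp⟩
  refine fun h => hacyc ((hl.of_isInfix hpre.isInfix).hasCycle_of_tgt_getLast_eq (by simp) ?_)
  cases a <;> simpa using h

end IsTrail

theorem exists_isLongestTrailIn (S : Finset E) : ∃ l, IsLongestTrailIn src tgt S l := by
  classical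
  let P k := ∃ l, IsTrail src tgt l ∧ (∀ e ∈ l, e ∈ S) ∧ l.length = k
  obtain ⟨l, hl, hlS, hlen⟩ := Nat.findGreatest_spec (P := P) (n := #S) (Nat.zero_le _)
    ⟨[], by simp [IsTrail], by simp, rfl⟩
  refine ⟨l, hl, hlS, fun l' hl' hl'S =>
    hlen ▸ Nat.le_findGreatest ?_ ⟨l', hl', hl'S, rfl⟩⟩
  rw [← List.toFinset_card_of_nodup hl'.1]
  exact card_le_card fun e he => hl'S e (List.mem_toFinset.1 he)

namespace IsLongestTrailIn

variable {S : Finset E} {l : List E}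

theorem ne_nil (h : IsLongestTrailIn src tgt S l) (hS : S.Nonempty) : l ≠ [] := by
  obtain ⟨e, he⟩ := hS
  have := h.2.2 [e] ⟨List.nodup_singleton e, List.isChain_singleton e⟩ (by simpa using he)
  rintro rfl
  simp at this

theorem tgt_getLast_eq [DecidableEq V] {s : V} (h : IsLongestTrailIn src tgt S l)
    (hacyc : ¬ HasCycle src tgt) (hdeg : InDegLeOutDeg src tgt s S)
    (hne : l ≠ []) : tgt (l.getLast hne) = s := by
  obtain ⟨hl, hlS, hmax⟩ := h
  by_contra hw
  obtain ⟨f, hf⟩ : {e ∈ S | src e = tgt (l.getLast hne)}.Nonempty := by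
    rw [← card_pos]
    refine lt_of_lt_of_le (card_pos.2 ⟨l.getLast hne, ?_⟩) (hdeg _ hw)
    simp [hlS _ (List.getLast_mem hne)]
  rw [mem_filter] at hf
  have hfl : f ∉ l := fun h => hl.src_ne_tgt_getLast hacyc hne h hf.2
  have := hmax _ (hl.concat hne hfl hf.2.symm) fun e he => by
    rcases List.mem_append.1 he with he | he
    exacts [hlS e he, List.mem_singleton.1 he ▸ hf.1]
  simp at this

theorem tgt_ne_src_head (h : IsLongestTrailIn src tgt S l) (hacyc : ¬ HasCycle src tgt)
    (hne : l ≠ []) {f : E} (hf : f ∈ S) : tgt f ≠ src (l.head hne) := by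
  obtain ⟨hl, hlS, hmax⟩ := h
  intro hfh
  by_cases hfl : f ∈ l
  · exact hl.tgt_ne_src_head hacyc hne hfl hfh
  · have := hmax _ (hl.cons hne hfl hfh) (by simpa using ⟨hf, hlS⟩)
    simp at this

end IsLongestTrailIn

theorem map_src_append_tgt_getLast {l : List E} (hl : l.IsChain (fun a b => tgt a = src b))
    (hne : l ≠ []) : l.map src ++ [tgt (l.getLast hne)] = src (l.head hne) :: l.map tgt := by
  induction l with
  | nil => contradiction
  | cons a t ih =>
    cases t with
    | nil => rfl
    | cons b t =>
      rw [List.isChain_cons_cons] at hl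
      rw [List.getLast_cons (List.cons_ne_nil b t), List.map_cons, List.cons_append, ih hl.2]
      simp [hl.1]

theorem countP_src_add_eq_add_countP_tgt [DecidableEq V] {l : List E}
    (hl : l.IsChain (fun a b => tgt a = src b)) (hne : l ≠ []) (v : V) :
    l.countP (fun e => src e = v) + (if tgt (l.getLast hne) = v then 1 else 0) =
      l.countP (fun e => tgt e = v) + (if src (l.head hne) = v then 1 else 0) := by
  have := congrArg (List.countP (· = v)) (map_src_append_tgt_getLast hl hne)
  simpa [List.countP_cons, List.countP_map, Function.comp_def] using this

theorem card_filter_sdiff_add_countP [DecidableEq E] {S : Finset E} {l : List E} (hl : l.Nodup)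
    (hlS : ∀ e ∈ l, e ∈ S) (p : E → Prop) [DecidablePred p] :
    #{e ∈ S \ l.toFinset | p e} + l.countP (p ·) = #{e ∈ S | p e} := by
  have hdiff : {e ∈ S | p e} \ l.toFinset = {e ∈ S \ l.toFinset | p e} := by
    ext e; simp only [mem_sdiff, mem_filter]; tauto
  have hinter : {e ∈ S | p e} ∩ l.toFinset = (l.filter (p ·)).toFinset := by
    ext e; simp only [mem_inter, mem_filter, List.mem_toFinset, List.mem_filter, decide_eq_true_eq]
    constructor
    · exact fun h => ⟨h.2, h.1.2⟩
    · exact fun h => ⟨⟨hlS e h.1, h.2⟩, h.1⟩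
  rw [← card_sdiff_add_card_inter {e ∈ S | p e} l.toFinset, hdiff, hinter,
    List.toFinset_card_of_nodup (hl.filter _), List.countP_eq_length_filter]

theorem InDegLeOutDeg.sdiff_toFinset [DecidableEq V] [DecidableEq E] {S : Finset E} {s : V}
    {l : List E} (hdeg : InDegLeOutDeg src tgt s S) (hl : IsTrail src tgt l)
    (hlS : ∀ e ∈ l, e ∈ S) (hne : l ≠ []) (hlast : tgt (l.getLast hne) = s)
    (hhead : ∀ f ∈ S, tgt f ≠ src (l.head hne)) :
    InDegLeOutDeg src tgt s (S \ l.toFinset) := by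
  intro v hv
  have hin := card_filter_sdiff_add_countP hl.1 hlS (tgt · = v)
  have hout := card_filter_sdiff_add_countP hl.1 hlS (src · = v)
  have hcount := countP_src_add_eq_add_countP_tgt hl.2 hne v
  rw [hlast, if_neg (Ne.symm hv)] at hcount
  by_cases hv' : src (l.head hne) = v
  · have : #{e ∈ S | tgt e = v} = 0 := card_eq_zero.2 (filter_eq_empty_iff.2 (hv' ▸ hhead))
    omega
  · rw [if_neg hv'] at hcount
    have := hdeg v hv
    omega

theorem perm_append_toList_sdiff [DecidableEq E] {S : Finset E} {l : List E} (hl : l.Nodup)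
    (hlS : ∀ e ∈ l, e ∈ S) : (l ++ (S \ l.toFinset).toList).Perm S.toList := by
  refine (List.perm_ext_iff_of_nodup ?_ S.nodup_toList).2 fun e => ?_
  · exact List.nodup_append.2 ⟨hl, (S \ l.toFinset).nodup_toList,
      fun a ha b hb => by rintro rfl; simp [ha] at hb⟩
  · have := hlS e
    simp only [List.mem_append, mem_toList, mem_sdiff, List.mem_toFinset]
    tauto

theorem exists_perm_toList_forall_isPathTo [DecidableEq V] [DecidableEq E] {s : V}
    (hacyc : ¬ HasCycle src tgt) (S : Finset E) (hdeg : InDegLeOutDeg src tgt s S) :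
    ∃ paths : List (List E),
      paths.flatten.Perm S.toList ∧ ∀ p ∈ paths, IsPathTo src tgt s p := by
  induction S using Finset.strongInduction with
  | H S ih =>
  obtain rfl | hS := S.eq_empty_or_nonempty
  · exact ⟨[], by simp, by simp⟩
  obtain ⟨l, hlong⟩ := exists_isLongestTrailIn (src := src) (tgt := tgt) S
  have ⟨hl, hlS, _⟩ := hlong
  have hne := hlong.ne_nil hS
  have hlast := hlong.tgt_getLast_eq hacyc hdeg hne
  have hssub : S \ l.toFinset ⊂ S :=
    sdiff_ssubset (fun e he => hlS e (List.mem_toFinset.1 he)) (by simpa using hne)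
  obtain ⟨paths, hperm, hpaths⟩ :=
    ih _ hssub (hdeg.sdiff_toFinset hl hlS hne hlast fun f hf => hlong.tgt_ne_src_head hacyc hne hf)
  refine ⟨l :: paths, ?_, ?_⟩
  · rw [List.flatten_cons]
    exact (hperm.append_left l).trans (perm_append_toList_sdiff hl.1 hlS)
  · intro p hp
    rcases List.mem_cons.1 hp with rfl | hp
    · refine ⟨hne, hl.2, fun e he => ?_⟩
      rw [List.getLast?_eq_some_getLast hne, Option.some_inj] at he
      exact he ▸ hlast
    · exact hpaths p hp

end Multigraph

/-- In a finite directed multigraph (edges `E` with endpoints `src`, `tgt` over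
vertices `V`) with a distinguished sink `s`, if every vertex `v ≠ s` has
indegree at most outdegree, and the graph has no directed cycle, then the edge
set can be partitioned into edge-disjoint directed paths each ending at `s`. -/
theorem acyclic_multigraph_path_decomposition {V E : Type*}
    [Fintype E] [DecidableEq V] [DecidableEq E]
    (src tgt : E → V) (s : V)
    (hdeg : ∀ v : V, v ≠ s →
      (Finset.univ.filter fun e => tgt e = v).card ≤
        (Finset.univ.filter fun e => src e = v).card)
    (hacyc : ¬ ∃ (n : ℕ) (c : Fin (n + 1) → E), Function.Injective c ∧
      ∀ i, tgt (c i) = src (c (i + 1))) :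
    ∃ paths : List (List E),
      paths.flatten.Perm Finset.univ.toList ∧
      ∀ p ∈ paths, p ≠ [] ∧
        List.Chain' (fun a b => tgt a = src b) p ∧
        ∀ e, p.getLast? = some e → tgt e = s :=
  Multigraph.exists_perm_toList_forall_isPathTo hacyc univ hdeg
end

section
/- Applying the stationary single-epoch optimal policy π* (which matches queries only to providers that remain viable under π* itself) in every epoch yields an equilibrium from the first epoch onward: the set of viable providers is constant across all epochs, and the long-run average social welfare equals the single-epoch welfare of π*. -/
open Finset Filter

/-- Applying the stationary single-epoch optimal policy `π*` (which matches
queries only to providers that remain viable under `π*` itself) in every epoch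
yields an equilibrium from the first epoch on: the support of `π*` stays viable
forever, the set of viable providers is constant across epochs `k ≥ 1`, and the
long-run average social welfare equals the single-epoch welfare of `π*`. -/
theorem stationary_policy_equilibrium {Qt C : Type*} [Fintype Qt] [Fintype C]
    [DecidableEq C]
    (Qbar : Qt → ℝ) (hQ : ∀ q, 0 ≤ Qbar q)
    (ν : C → ℝ) (r : Qt → C → ℝ)
    (π : Qt → C → ℝ)
    (hπ0 : ∀ q c, 0 ≤ π q c)
    (hπ1 : ∀ q, ∑ c, π q c = 1)
    -- viability constraint: π* matches a provider only if it keeps it viable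
    (hviab : ∀ q c, 0 < π q c → ν c ≤ ∑ q', Qbar q' * π q' c)
    -- viability dynamics
    (V : ℕ → Finset C)
    (hV0 : V 0 = Finset.univ)
    (hVs : ∀ k, V (k + 1) = (V k).filter fun c => ν c ≤ ∑ q, Qbar q * π q c) :
    -- only viable providers are ever matched
    (∀ k q c, 0 < π q c → c ∈ V k) ∧
    -- equilibrium from the first epoch onward
    (∀ k, 1 ≤ k → V k = V 1) ∧
    -- the long-run average welfare equals the (constant) single-epoch welfare
    Tendsto
      (fun K : ℕ =>
        (∑ _k ∈ Finset.range K, ∑ q, ∑ c, Qbar q * π q c * r q c) / K)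
      atTop (nhds (∑ q, ∑ c, Qbar q * π q c * r q c)) := by
  have hsupp : ∀ k q c, 0 < π q c → c ∈ V k := by
    intro k
    induction k with
    | zero => intro q c _; simp [hV0]
    | succ k ih =>
        intro q c h
        rw [hVs k, Finset.mem_filter]
        exact ⟨ih q c h, hviab q c h⟩
  refine ⟨hsupp, ?_, ?_⟩
  · -- V constant from epoch 1 on
    have key : ∀ k, 1 ≤ k → V k = V 1 := by
      intro k hk
      induction k with
      | zero => omega
      | succ k ih =>
          rcases Nat.eq_or_lt_of_le hk with h | h
          · rw [← h]
          · have hk1 : 1 ≤ k := by omega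
            have := ih hk1
            rw [hVs k, this, hVs 0, hV0]
            ext c
            simp only [Finset.mem_filter, Finset.mem_univ, true_and, and_self]
    exact key
  · -- limit of constant average
    set w := ∑ q, ∑ c, Qbar q * π q c * r q c with hw
    have hconst : ∀ᶠ K : ℕ in atTop,
        (∑ _k ∈ Finset.range K, w) / (K : ℝ) = w := by
      filter_upwards [eventually_gt_atTop 0] with K hK
      have hK' : (K : ℝ) ≠ 0 := Nat.cast_ne_zero.mpr hK.ne'
      rw [Finset.sum_const, Finset.card_range, nsmul_eq_mul]
      field_simp
    exact tendsto_const_nhds.congr' (hconst.mono fun K h => h.symm)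
end

section
/- Consistency of the flow-construction output: every relocation triplet (c, c', u) in the edge set E returned by Algorithm 1 satisfies: either X(u) = c, or there exists another triplet (c'', c, u) ∈ E. Equivalently, for each user u, the edges of E labelled u form a (possibly empty) directed path starting at X(u). -/
/-- A set `E` of relocation triplets `(c, c', u)` is consistent w.r.t. a
matching `X` if every relocated user was either matched to the source provider
by `X`, or was relocated to the source provider by another triplet of `E`. -/
def Consistent {U C : Type*} (X : U → C) (E : Set (C × C × U)) : Prop :=
  ∀ c c' u, (c, c', u) ∈ E → X u = c ∨ ∃ c'', (c'', c, u) ∈ E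

/-- The triplets of `E` labelled by user `u`. -/
def userEdges {U C : Type*} (E : Set (C × C × U)) (u : U) : Set (C × C × U) :=
  {e ∈ E | e.2.2 = u}

lemma mem_userEdges {U C : Type*} (E : Set (C × C × U)) (u : U) (c c' : C) :
    (c, c', u) ∈ userEdges E u ↔ (c, c', u) ∈ E := by
  simp [userEdges]

/-- Consistency of the flow-construction output (Algorithm 1): if the blue
edges `E1` are consistent w.r.t. `X`, the red edges `E01` are consistent w.r.t.
`X¹` (obtained from `X` by applying `E1`), and `E` takes for each user either
nothing, the user's full blue chain, or the full red chain appended to the full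
blue chain, then `E` is consistent w.r.t. `X`. -/
theorem flow_construction_consistent {U C : Type*}
    (X X1 : U → C) (E1 E01 E : Set (C × C × U))
    (hcons1 : Consistent X E1)
    (hcons01 : Consistent X1 E01)
    -- X¹ is obtained from X by applying the blue relocations:
    -- either u's blue chain ends at X¹(u), or u has no blue edge and X¹(u) = X(u)
    (hX1 : ∀ u, (∃ c'', (c'', X1 u, u) ∈ E1) ∨
      (X1 u = X u ∧ ∀ c c', (c, c', u) ∉ E1))
    -- E picks, per user, nothing, the full blue chain, or blue ∪ red chains
    (hE : ∀ u, userEdges E u = ∅ ∨ userEdges E u = userEdges E1 u ∨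
      userEdges E u = userEdges E1 u ∪ userEdges E01 u) :
    Consistent X E := by
  intro c c' u hmem
  have hmemU : (c, c', u) ∈ userEdges E u := (mem_userEdges E u c c').2 hmem
  rcases hE u with h | h | h
  · rw [h] at hmemU; exact absurd hmemU (Set.notMem_empty _)
  · rw [h, mem_userEdges] at hmemU
    rcases hcons1 c c' u hmemU with hx | ⟨c'', h2⟩
    · exact Or.inl hx
    · refine Or.inr ⟨c'', ?_⟩
      have : (c'', c, u) ∈ userEdges E u := by
        rw [h, mem_userEdges]; exact h2
      exact (mem_userEdges E u c'' c).1 this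
  · rw [h] at hmemU
    have hback : ∀ c'' : C, (c'', c, u) ∈ E1 → (c'', c, u) ∈ E := by
      intro c'' h2
      have : (c'', c, u) ∈ userEdges E u := by
        rw [h]; exact Or.inl ((mem_userEdges E1 u c'' c).2 h2)
      exact (this).1
    rcases hmemU with hb | hr
    · rw [mem_userEdges] at hb
      rcases hcons1 c c' u hb with hx | ⟨c'', h2⟩
      · exact Or.inl hx
      · exact Or.inr ⟨c'', hback c'' h2⟩
    · rw [mem_userEdges] at hr
      rcases hcons01 c c' u hr with hx | ⟨c'', h2⟩
      · rcases hX1 u with ⟨c'', h2⟩ | ⟨heq, _⟩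
        · rw [hx] at h2
          exact Or.inr ⟨c'', hback c'' h2⟩
        · exact Or.inl (heq ▸ hx)
      · refine Or.inr ⟨c'', ?_⟩
        have : (c'', c, u) ∈ userEdges E u := by
          rw [h]; exact Or.inr ((mem_userEdges E01 u c'' c).2 h2)
        exact this.1
end
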